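/- There exists a constant c > 0 such that for every n ≥ 1 there is a binary word w of length n having at least c·n^{3/2} distinct square vectors. Equivalently, the maximum number of Abelian-nonequivalent Abelian-square subwords of a word of length n over an alphabet of size at least 2 is Ω(n^{3/2}). -/

import Mathlib

/-!
The word `(0^{4K+2} 1^{4K})^K (0^{4K+4} 1^{4K})^K` has length `Θ(K²)`. An Abelian square `uv`
crossing the middle, with `u` spanning `q` blocks of the first kind and `v` ending with `E - 1`
blocks of the second kind, has square vector `((2q+1)(2K+1) + E, 4Kq + x)`: the `2(E - 1)` extra
zeros of `v` are compensated by cutting a zero run off-centre, and `x < 4K` is the number of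
ones by which the square is shifted. The three parameters range independently over `Θ(K)`
values, which gives `Θ(K³) = Θ(n^{3/2})` distinct square vectors.
-/

/-- `(r, ℓ)` is a square vector of a binary word `w` if `w` has a fragment `u ++ v` with
`|u| = |v|` such that each of `u` and `v` contains exactly `r` zeros and exactly `ℓ` ones. -/
def SquareVector (w : List (Fin 2)) (r ℓ : ℕ) : Prop :=
  ∃ x u v y : List (Fin 2), w = x ++ u ++ v ++ y ∧ u.length = v.length ∧
    u.count 0 = r ∧ u.count 1 = ℓ ∧ v.count 0 = r ∧ v.count 1 = ℓ

open List

theorem Nat.eq_and_eq_of_mul_add_eq_mul_add {a b b' c c' : ℕ} (hc : c < a) (hc' : c' < a)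
    (h : a * b + c = a * b' + c') : b = b' ∧ c = c' := by
  have hb := congrArg (· / a) h
  simp only [Nat.mul_add_div (by omega : 0 < a), Nat.div_eq_of_lt hc, Nat.div_eq_of_lt hc',
    add_zero] at hb
  subst hb
  exact ⟨rfl, by omega⟩

theorem Real.rpow_three_halves_le {x y : ℝ} (hx : 0 ≤ x) (hy : 0 ≤ y) (h : x ≤ y ^ 2) :
    x ^ ((3 : ℝ) / 2) ≤ y ^ 3 := by
  calc x ^ ((3 : ℝ) / 2) ≤ (y ^ 2) ^ ((3 : ℝ) / 2) := Real.rpow_le_rpow hx h (by norm_num)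
    _ = y ^ 3 := by
      rw [← Real.rpow_natCast y 2, ← Real.rpow_mul hy]; norm_num

theorem List.flatten_replicate_add {α : Type*} (a b : ℕ) (l : List α) :
    (replicate (a + b) l).flatten = (replicate a l).flatten ++ (replicate b l).flatten := by
  rw [replicate_add, flatten_append]

theorem List.replicate_append_replicate_append {α : Type*} (a b : ℕ) (c : α) (l : List α) :
    replicate a c ++ (replicate b c ++ l) = replicate (a + b) c ++ l := by
  rw [← append_assoc, replicate_append_replicate]

def squareVectors (w : List (Fin 2)) : Set (ℕ × ℕ) := {p | SquareVector w p.1 p.2}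

namespace SquareVector

theorem zero_zero (w : List (Fin 2)) : SquareVector w 0 0 :=
  ⟨[], [], [], w, rfl, rfl, rfl, rfl, rfl, rfl⟩

theorem append_right {w : List (Fin 2)} {r ℓ : ℕ} (h : SquareVector w r ℓ) (z : List (Fin 2)) :
    SquareVector (w ++ z) r ℓ := by
  obtain ⟨x, u, v, y, rfl, huv, hu⟩ := h
  exact ⟨x, u, v, y ++ z, by simp only [append_assoc], huv, hu⟩

theorem le_length {w : List (Fin 2)} {r ℓ : ℕ} (h : SquareVector w r ℓ) :
    r ≤ w.length ∧ ℓ ≤ w.length := by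
  obtain ⟨x, u, v, y, rfl, -, rfl, rfl, -, -⟩ := h
  have hu : u.length ≤ (x ++ u ++ v ++ y).length := by simp only [length_append]; omega
  exact ⟨count_le_length.trans hu, count_le_length.trans hu⟩

end SquareVector

theorem finite_squareVectors (w : List (Fin 2)) : (squareVectors w).Finite :=
  (Set.finite_Iic (w.length, w.length)).subset fun _ hp => hp.le_length

theorem one_le_ncard_squareVectors (w : List (Fin 2)) : 1 ≤ (squareVectors w).ncard :=
  (Set.ncard_pos (finite_squareVectors w)).mpr ⟨(0, 0), .zero_zero w⟩

theorem ncard_squareVectors_le_append (w z : List (Fin 2)) :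
    (squareVectors w).ncard ≤ (squareVectors (w ++ z)).ncard :=
  Set.ncard_le_ncard (fun _ hp => hp.append_right z) (finite_squareVectors _)

def blockWord (K : ℕ) : List (Fin 2) :=
  (replicate K (replicate (4 * K + 2) 0 ++ replicate (4 * K) 1)).flatten ++
    (replicate K (replicate (4 * K + 4) 0 ++ replicate (4 * K) 1)).flatten

theorem length_blockWord (K : ℕ) : (blockWord K).length = 16 * K ^ 2 + 6 * K := by
  simp [blockWord]; ring

theorem squareVector_blockWord {K q E x : ℕ} (hE : 1 ≤ E) (hEq : E ≤ q) (hqK : 2 * q + 2 ≤ K + E)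
    (hx : x ≤ 4 * K) :
    SquareVector (blockWord K) ((2 * q + 1) * (2 * K + 1) + E) (4 * K * q + x) := by
  obtain ⟨e, rfl⟩ : ∃ e, E = e + 1 := ⟨E - 1, by omega⟩
  obtain ⟨F, rfl⟩ : ∃ F, q = e + 1 + F := ⟨q - (e + 1), by omega⟩
  obtain ⟨A, hK⟩ : ∃ A, K = A + e + 2 * F + 3 := ⟨K - (e + 2 * F + 3), by omega⟩
  obtain ⟨y, hxy⟩ : ∃ y, x + y = 4 * K := ⟨4 * K - x, by omega⟩
  set G := replicate (4 * K + 2) 0 ++ replicate (4 * K) (1 : Fin 2)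
  set D := replicate (4 * K + 4) 0 ++ replicate (4 * K) (1 : Fin 2)
  refine ⟨(replicate A G).flatten ++ replicate (4 * K + 2) 0 ++ replicate y 1,
    replicate x 1 ++ (replicate (e + 1 + F) G).flatten ++ replicate (2 * A + 3 * e + 4 * F + 8) 0,
    replicate (2 * A + e + 4 * F + 6) 0 ++ replicate (4 * K) 1 ++ (replicate F G).flatten ++
      (replicate e D).flatten ++ replicate (4 * K + 4) 0 ++ replicate x 1,
    replicate y 1 ++ (replicate (A + 2 * F + 2) D).flatten, ?_, ?_, ?_, ?_, ?_, ?_⟩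
  · have hG : (replicate K G).flatten = (replicate A G).flatten ++ G ++
        (replicate (e + 1 + F) G).flatten ++ G ++ (replicate F G).flatten := by
      rw [show K = A + 1 + (e + 1 + F) + 1 + F by omega]
      simp only [flatten_replicate_add, replicate_one, flatten_singleton, append_assoc]
    have hD : (replicate K D).flatten =
        (replicate e D).flatten ++ D ++ (replicate (A + 2 * F + 2) D).flatten := by
      rw [show K = e + 1 + (A + 2 * F + 2) by omega]
      simp only [flatten_replicate_add, replicate_one, flatten_singleton, append_assoc]
    rw [blockWord, hG, hD]
    simp only [G, D, append_assoc]
    rw [replicate_append_replicate_append y x, replicate_append_replicate_append x y,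
      replicate_append_replicate_append (2 * A + 3 * e + 4 * F + 8), hxy,
      show 2 * A + 3 * e + 4 * F + 8 + (2 * A + e + 4 * F + 6) = 4 * K + 2 by omega,
      add_comm y, hxy]
  all_goals
    subst hK
    simp only [length_append, length_replicate, length_flatten, count_append, count_replicate,
      count_flatten, map_replicate, sum_replicate, G, D]
    norm_num
    ring

theorem cube_le_ncard_squareVectors_blockWord (m : ℕ) :
    16 * m ^ 3 ≤ (squareVectors (blockWord (4 * m))).ncard := by
  set box := Finset.Ico m (2 * m) ×ˢ Finset.Icc 1 m ×ˢ Finset.range (16 * m)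
  have hbox : box.card = 16 * m ^ 3 := by
    simp only [box, Finset.card_product, Nat.card_Ico, Nat.card_Icc, Finset.card_range]
    rw [show 2 * m - m = m by omega, Nat.add_sub_cancel]; ring
  rw [← hbox, ← Set.ncard_coe_finset]
  refine Set.ncard_le_ncard_of_injOn
    (fun t => ((2 * t.1 + 1) * (2 * (4 * m) + 1) + t.2.1, 4 * (4 * m) * t.1 + t.2.2))
    ?_ ?_ (finite_squareVectors _)
  · rintro ⟨q, E, x⟩ ht
    simp only [box, Finset.coe_product, Set.mem_prod, Finset.coe_Ico, Finset.coe_Icc,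
      Finset.coe_range, Set.mem_Ico, Set.mem_Icc, Set.mem_Iio] at ht
    exact squareVector_blockWord (q := q) (E := E) (x := x) (by omega) (by omega) (by omega)
      (by omega)
  · rintro ⟨q, E, x⟩ ht ⟨q', E', x'⟩ ht' h
    simp only [box, Finset.coe_product, Set.mem_prod, Finset.coe_Ico, Finset.coe_Icc,
      Finset.coe_range, Set.mem_Ico, Set.mem_Icc, Set.mem_Iio, Prod.mk.injEq] at ht ht' h
    obtain ⟨rfl, rfl⟩ := Nat.eq_and_eq_of_mul_add_eq_mul_add (by omega) (by omega) h.2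
    simp_all

/-- There is a constant `c > 0` such that for every `n ≥ 1` there is a binary word of
length `n` with at least `c · n^{3/2}` distinct square vectors; i.e., the maximum number of
Abelian-nonequivalent Abelian-square subwords of a word of length `n` over an alphabet of
size at least 2 is `Ω(n^{3/2})`. -/
theorem abelian_nonequivalent_squares_lower_bound :
    ∃ c : ℝ, 0 < c ∧ ∀ n : ℕ, 1 ≤ n → ∃ w : List (Fin 2), w.length = n ∧
      c * (n : ℝ) ^ ((3 : ℝ) / 2) ≤
        ({p : ℕ × ℕ | SquareVector w p.1 p.2}.ncard : ℝ) := by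
  refine ⟨1 / 17 ^ 3, by positivity, fun n _ => ?_⟩
  set m := Nat.sqrt n / 17
  set w := blockWord (4 * m)
  have hw : w.length ≤ n := by
    rw [length_blockWord]
    calc 16 * (4 * m) ^ 2 + 6 * (4 * m) ≤ (17 * m) ^ 2 := by nlinarith [Nat.le_mul_self m]
      _ ≤ n.sqrt ^ 2 := Nat.pow_le_pow_left (by omega) 2
      _ ≤ n := Nat.sqrt_le' n
  set pad := replicate (n - w.length) (0 : Fin 2)
  refine ⟨w ++ pad, by simp only [pad, length_append, length_replicate]; omega, ?_⟩
  have hcube : (m + 1) ^ 3 ≤ (squareVectors (w ++ pad)).ncard := by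
    have h16 := (cube_le_ncard_squareVectors_blockWord m).trans (ncard_squareVectors_le_append w pad)
    have h1 := one_le_ncard_squareVectors (w ++ pad)
    rcases Nat.eq_zero_or_pos m with hm | hm
    · simpa [hm] using h1
    · calc (m + 1) ^ 3 ≤ (2 * m) ^ 3 := Nat.pow_le_pow_left (by omega) 3
        _ ≤ _ := by linarith
  have hn : (n : ℝ) ≤ (17 * (m + 1) : ℝ) ^ 2 := by
    have h17 : n.sqrt + 1 ≤ 17 * (m + 1) := by omega
    exact_mod_cast (Nat.lt_succ_sqrt' n).le.trans (Nat.pow_le_pow_left h17 2)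
  calc (1 / 17 ^ 3 : ℝ) * (n : ℝ) ^ ((3 : ℝ) / 2) ≤ 1 / 17 ^ 3 * (17 * (m + 1)) ^ 3 := by
        gcongr; exact Real.rpow_three_halves_le (by positivity) (by positivity) hn
    _ = (((m + 1) ^ 3 : ℕ) : ℝ) := by push_cast; ring
    _ ≤ _ := by exact_mod_cast hcube
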